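/- Let d ≥ 1 and let ℓ_{d−1} = arccos(−1/d) be the geodesic arclength between two vertices of the regular d-dimensional simplex inscribed in S^{d−1}. Then for every α with 0 < α ≤ ℓ_{d−1}, every ε with 0 < ε < α, and every finite (ε/4)-net X of S^d, the chromatic number of the ε-distance graph D_{X,ε}(α) is at least d+2. -/

import Mathlib

open scoped RealInnerProductSpace

/-- Geodesic distance `arccos ⟨x, y⟩` on the unit sphere in `ℝ^n`. -/
noncomputable def gd {n : ℕ} (x y : EuclideanSpace ℝ (Fin n)) : ℝ :=
  Real.arccos (inner ℝ x y : ℝ)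

lemma gd_comm {n : ℕ} (x y : EuclideanSpace ℝ (Fin n)) : gd x y = gd y x := by
  rw [gd, gd, real_inner_comm]

/-- The unit sphere `S^d ⊆ ℝ^{d+1}`. -/
noncomputable def unitSphere (d : ℕ) : Set (EuclideanSpace ℝ (Fin (d + 1))) :=
  Metric.sphere 0 1

/-- `X` is an `r`-net of `S^d`: every point of the sphere is within geodesic
distance `r` of a point of `X`. -/
def IsNet (d : ℕ) (r : ℝ) (X : Set (EuclideanSpace ℝ (Fin (d + 1)))) : Prop :=
  ∀ y ∈ unitSphere d, ∃ x ∈ X, gd x y ≤ r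

/-- The ε-distance graph with parameter α on a set `X ⊆ ℝ^n`: distinct points are
adjacent iff their geodesic distance lies in `[α - ε, α + ε]`. -/
noncomputable def distGraph {n : ℕ} (X : Set (EuclideanSpace ℝ (Fin n))) (α ε : ℝ) :
    SimpleGraph X where
  Adj x y := x ≠ y ∧ α - ε ≤ gd x.1 y.1 ∧ gd x.1 y.1 ≤ α + ε
  symm := by
    refine ⟨fun x y h => ?_⟩
    exact ⟨h.1.symm, by rw [gd_comm]; exact h.2.1, by rw [gd_comm]; exact h.2.2⟩
  loopless := ⟨fun x h => h.1 rfl⟩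

/-!
Work first with the distance graph on the whole sphere, with any tolerance `δ > 0`: snapping
each point to a net point within `ε / 4` is a homomorphism from the sphere graph with tolerance
`ε / 2` to the graph on the net. On the sphere, induct on `d`.

For `d = 1`, choose an odd `m` and `β ∈ (α - δ, α]` with `m β ∈ 2πℤ`; the points at angles `k β`
form an odd cycle. For the step, fix `p ∈ S^{d+1}` and map `S^d` onto the small sphere of points
at distance `α` from `p`, all of which are adjacent to `p`. Two points at angle `θ` in `S^d` land
at distance `arccos (sin² α cos θ + cos² α)`, which is `α` for `θ = arccos (cos α / (1 + cos α))`,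
and `α ≤ arccos (-1/(d+1))` gives `θ ≤ arccos (-1/d)`. So a `(d+2)`-colouring of the graph on
`S^{d+1}` restricts to a `(d+1)`-colouring of a distance graph on `S^d` with parameter `θ`.
-/

open Real InnerProductGeometry

section Geodesic

variable {n : ℕ} {x y z x' y' : EuclideanSpace ℝ (Fin n)}

lemma mem_unitSphere_iff {d : ℕ} {x : EuclideanSpace ℝ (Fin (d + 1))} :
    x ∈ unitSphere d ↔ ‖x‖ = 1 := by
  simp [unitSphere]

lemma gd_eq_angle (hx : ‖x‖ = 1) (hy : ‖y‖ = 1) : gd x y = angle x y := by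
  simp [gd, angle, hx, hy]

lemma gd_self (hx : ‖x‖ = 1) : gd x x = 0 := by
  rw [gd_eq_angle hx hx, angle_self (norm_ne_zero_iff.mp (by simp [hx]))]

lemma gd_triangle (hx : ‖x‖ = 1) (hy : ‖y‖ = 1) (hz : ‖z‖ = 1) :
    gd x z ≤ gd x y + gd y z := by
  simpa only [gd_eq_angle, hx, hy, hz] using angle_le_angle_add_angle x y z

lemma abs_gd_sub_gd_le (hx : ‖x‖ = 1) (hy : ‖y‖ = 1) (hx' : ‖x'‖ = 1) (hy' : ‖y'‖ = 1) :
    |gd x' y' - gd x y| ≤ gd x' x + gd y' y := by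
  have := gd_triangle hx' hx hy'; have := gd_triangle hx hy hy'
  have := gd_triangle hx hx' hy; have := gd_triangle hx' hy' hy
  rw [abs_le]; constructor <;> linarith [gd_comm x x', gd_comm y y']

end Geodesic

section DistGraph

variable {n : ℕ} {X : Set (EuclideanSpace ℝ (Fin n))} {α ε : ℝ}

lemma distGraph_adj_of_abs_sub_le {x y : X} (hx : ‖x.1‖ = 1)
    (h : |gd x.1 y.1 - α| ≤ ε) (hεα : ε < α) : (distGraph X α ε).Adj x y := by
  obtain ⟨hlo, hhi⟩ := abs_le.mp h
  refine ⟨fun hxy => ?_, by linarith, by linarith⟩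
  rw [hxy, gd_self (hxy ▸ hx)] at hlo
  linarith

lemma abs_gd_sub_le_of_adj {x y : X} (h : (distGraph X α ε).Adj x y) : |gd x.1 y.1 - α| ≤ ε :=
  abs_le.mpr ⟨by linarith [h.2.1], by linarith [h.2.2]⟩

end DistGraph

lemma IsNet.nonempty_hom {d : ℕ} {X : Set (EuclideanSpace ℝ (Fin (d + 1)))} {α ε : ℝ}
    (hXS : X ⊆ unitSphere d) (hnet : IsNet d (ε / 4) X) (hεα : ε < α) :
    Nonempty (distGraph (unitSphere d) α (ε / 2) →g distGraph X α ε) := by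
  choose snap hsnapX hsnap using fun y : unitSphere d => hnet y.1 y.2
  have hunit (y : unitSphere d) : ‖snap y‖ = 1 := mem_unitSphere_iff.mp (hXS (hsnapX y))
  refine ⟨⟨fun y => ⟨snap y, hsnapX y⟩, fun {u v} huv => ?_⟩⟩
  refine distGraph_adj_of_abs_sub_le (hunit u) ?_ hεα
  have hclose : |gd (snap u) (snap v) - gd u.1 v.1| ≤ gd (snap u) u.1 + gd (snap v) v.1 :=
    abs_gd_sub_gd_le (mem_unitSphere_iff.mp u.2) (mem_unitSphere_iff.mp v.2) (hunit u) (hunit v)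
  have hadj := abs_gd_sub_le_of_adj huv
  have hsu := hsnap u
  have hsv := hsnap v
  calc |gd (snap u) (snap v) - α|
      ≤ |gd (snap u) (snap v) - gd u.1 v.1| + |gd u.1 v.1 - α| := abs_sub_le _ _ _
    _ ≤ ε := by linarith

noncomputable def circlePoint (t : ℝ) : EuclideanSpace ℝ (Fin 2) := !₂[cos t, sin t]

lemma norm_circlePoint (t : ℝ) : ‖circlePoint t‖ = 1 := by
  simp [circlePoint, EuclideanSpace.norm_eq, Fin.sum_univ_two]

lemma circlePoint_mem_unitSphere (t : ℝ) : circlePoint t ∈ unitSphere 1 := by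
  simp [unitSphere, norm_circlePoint]

lemma gd_circlePoint (s t : ℝ) : gd (circlePoint s) (circlePoint t) = arccos (cos (s - t)) := by
  simp only [gd, circlePoint, PiLp.inner_apply, Fin.sum_univ_two, cos_sub]
  simp [mul_comm]

lemma Fin.exists_val_sub_val_eq_of_val_sub_eq_one {m : ℕ} {u v : Fin m} (h : (u - v).val = 1) :
    ∃ q : ℤ, (u : ℤ) - v = 1 + m * q := by
  rw [Fin.val_sub] at h
  obtain ⟨k, hk⟩ : ∃ k : ℕ, 1 + m * k = m - v + u := ⟨_, h ▸ Nat.mod_add_div (m - v + u) m⟩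
  zify [v.isLt.le] at hk
  exact ⟨k - 1, by linear_combination -hk⟩

lemma exists_two_pi_mul_div_mem_Ioc {α δ : ℝ} (hα : 0 ≤ α) (hδ : 0 < δ) :
    ∃ N w : ℕ, 2 * π * w / (2 * N + 3) ∈ Set.Ioc (α - δ) α := by
  obtain ⟨N, hN⟩ := exists_nat_gt (2 * π / δ)
  set m : ℝ := 2 * N + 3
  have hm : 0 < m := by positivity
  have hmδ : 2 * π / m < δ := by
    rw [div_lt_iff₀ hm]; rw [div_lt_iff₀ hδ] at hN; nlinarith
  set w := ⌊m * α / (2 * π)⌋₊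
  have hw := Nat.floor_le (by positivity : 0 ≤ m * α / (2 * π))
  have hw' := Nat.lt_floor_add_one (m * α / (2 * π))
  refine ⟨N, w, ?_, ?_⟩
  · rw [lt_div_iff₀ hm]; rw [div_lt_iff₀ hm] at hmδ
    rw [div_lt_iff₀ (by positivity)] at hw'
    nlinarith
  · rw [div_le_iff₀ hm]; rw [le_div_iff₀ (by positivity)] at hw
    nlinarith

lemma gd_circlePoint_of_val_sub_eq_one {m : ℕ} {β : ℝ} {w : ℤ} (hmβ : m * β = w * (2 * π))
    (hβ0 : 0 ≤ β) (hβπ : β ≤ π) {u v : Fin m} (h : (u - v).val = 1) :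
    gd (circlePoint (u * β)) (circlePoint (v * β)) = β := by
  obtain ⟨q, hq⟩ := Fin.exists_val_sub_val_eq_of_val_sub_eq_one h
  have : (u : ℝ) * β - v * β = β + (q * w : ℤ) * (2 * π) := by
    have hq' : (u : ℝ) - v = 1 + m * q := by exact_mod_cast hq
    push_cast
    linear_combination β * hq' + q * hmβ
  rw [gd_circlePoint, this, cos_add_int_mul_two_pi, arccos_cos hβ0 hβπ]

lemma nonempty_hom_cycleGraph {m : ℕ} {α β δ : ℝ} {w : ℤ} (hmβ : m * β = w * (2 * π))
    (hβ0 : 0 ≤ β) (hβπ : β ≤ π) (hβα : |β - α| ≤ δ) (hδα : δ < α) :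
    Nonempty (SimpleGraph.cycleGraph m →g distGraph (unitSphere 1) α δ) := by
  refine ⟨⟨fun k => ⟨circlePoint (k * β), circlePoint_mem_unitSphere _⟩, fun {u v} huv => ?_⟩⟩
  refine distGraph_adj_of_abs_sub_le (norm_circlePoint _) ?_ hδα
  rcases SimpleGraph.cycleGraph_adj'.mp huv with h | h
  · rwa [gd_circlePoint_of_val_sub_eq_one hmβ hβ0 hβπ h]
  · rwa [gd_comm, gd_circlePoint_of_val_sub_eq_one hmβ hβ0 hβπ h]

lemma not_colorable_two_distGraph_unitSphere_one {α δ : ℝ} (hδ : 0 < δ) (hδα : δ < α)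
    (hαπ : α ≤ π) : ¬ (distGraph (unitSphere 1) α δ).Colorable 2 := by
  obtain ⟨N, w, hlo, hhi⟩ := exists_two_pi_mul_div_mem_Ioc (hδ.trans hδα).le hδ
  set β := 2 * π * w / (2 * N + 3)
  have hmβ : ((2 * N + 3 : ℕ) : ℝ) * β = (w : ℤ) * (2 * π) := by
    push_cast; rw [mul_div_cancel₀ _ (by positivity)]; ring
  obtain ⟨φ⟩ := nonempty_hom_cycleGraph hmβ (by linarith) (hhi.trans hαπ)
    (abs_le.mpr ⟨by linarith, by linarith⟩) hδα
  intro hcol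
  have h3 := SimpleGraph.chromaticNumber_cycleGraph_of_odd (2 * N + 3) (by omega) ⟨N + 1, by ring⟩
  have := (hcol.of_hom φ).chromaticNumber_le
  rw [h3] at this
  norm_num at this

lemma SimpleGraph.Colorable.of_hom_of_forall_adj {V W : Type*} {G : SimpleGraph V}
    {H : SimpleGraph W} {n : ℕ} (φ : H →g G) {p : V} (hp : ∀ w, G.Adj p (φ w))
    (hG : G.Colorable (n + 1)) : H.Colorable n := by
  obtain ⟨C⟩ := hG
  let C' : H.Coloring {i // i ≠ C p} :=
    .mk (fun w => ⟨C (φ w), (C.valid (hp w)).symm⟩)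
      (fun h heq => C.valid (φ.map_rel h) (congrArg Subtype.val heq))
  simpa using C'.colorable

section Cap

variable {E F : Type*} [NormedAddCommGroup E] [InnerProductSpace ℝ E]
  [NormedAddCommGroup F] [InnerProductSpace ℝ F]

noncomputable def capMap (f : F →ₗᵢ[ℝ] E) (p : E) (α : ℝ) (u : F) : E :=
  sin α • f u + cos α • p

variable {f : F →ₗᵢ[ℝ] E} {p : E} (α : ℝ)

lemma inner_capMap (hp : ‖p‖ = 1) (hfp : ∀ u, ⟪f u, p⟫ = 0) (u v : F) :
    ⟪capMap f p α u, capMap f p α v⟫ = sin α ^ 2 * ⟪u, v⟫ + cos α ^ 2 := by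
  have hpf : ∀ u, ⟪p, f u⟫ = 0 := fun u => by rw [real_inner_comm, hfp]
  have hpp : ⟪p, p⟫ = 1 := by rw [real_inner_self_eq_norm_sq, hp, one_pow]
  simp only [capMap, inner_add_left, inner_add_right, real_inner_smul_left,
    real_inner_smul_right, f.inner_map_map, hfp, hpf, hpp]
  ring

lemma inner_capMap_right (hp : ‖p‖ = 1) (hfp : ∀ u, ⟪f u, p⟫ = 0) (u : F) :
    ⟪p, capMap f p α u⟫ = cos α := by
  have hpf : ⟪p, f u⟫ = 0 := by rw [real_inner_comm, hfp]
  have hpp : ⟪p, p⟫ = 1 := by rw [real_inner_self_eq_norm_sq, hp, one_pow]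
  simp only [capMap, inner_add_right, real_inner_smul_right, hpf, hpp]
  ring

lemma norm_capMap (hp : ‖p‖ = 1) (hfp : ∀ u, ⟪f u, p⟫ = 0) {u : F} (hu : ‖u‖ = 1) :
    ‖capMap f p α u‖ = 1 := by
  have h := inner_capMap α hp hfp u u
  rw [real_inner_self_eq_norm_sq, real_inner_self_eq_norm_sq, hu, one_pow, mul_one,
    sin_sq_add_cos_sq] at h
  exact (pow_eq_one_iff_of_nonneg (norm_nonneg _) two_ne_zero).mp h

end Cap

lemma exists_linearIsometry_inner_eq_zero (n : ℕ) {p : EuclideanSpace ℝ (Fin (n + 1))}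
    (hp : p ≠ 0) : ∃ f : EuclideanSpace ℝ (Fin n) →ₗᵢ[ℝ] EuclideanSpace ℝ (Fin (n + 1)),
      ∀ u, ⟪f u, p⟫ = 0 := by
  have : Fact (Module.finrank ℝ (EuclideanSpace ℝ (Fin (n + 1))) = n + 1) := ⟨by simp⟩
  let B := OrthonormalBasis.fromOrthogonalSpanSingleton (𝕜 := ℝ) n hp
  exact ⟨(Submodule.subtypeₗᵢ _).comp B.repr.symm.toLinearIsometry,
    fun u => Submodule.mem_orthogonal_singleton_iff_inner_left.mp (B.repr.symm u).2⟩

section CapGeodesic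

variable {n k : ℕ} {f : EuclideanSpace ℝ (Fin n) →ₗᵢ[ℝ] EuclideanSpace ℝ (Fin k)}
  {p : EuclideanSpace ℝ (Fin k)} {α : ℝ}

lemma gd_capMap (hp : ‖p‖ = 1) (hfp : ∀ u, ⟪f u, p⟫ = 0) {u v : EuclideanSpace ℝ (Fin n)}
    (hu : ‖u‖ = 1) (hv : ‖v‖ = 1) :
    gd (capMap f p α u) (capMap f p α v) = arccos (sin α ^ 2 * cos (gd u v) + cos α ^ 2) := by
  rw [gd, inner_capMap α hp hfp, gd_eq_angle hu hv, cos_angle, hu, hv, mul_one, div_one]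

lemma gd_capMap_right (hp : ‖p‖ = 1) (hfp : ∀ u, ⟪f u, p⟫ = 0) (hα0 : 0 ≤ α) (hαπ : α ≤ π)
    (u : EuclideanSpace ℝ (Fin n)) : gd p (capMap f p α u) = α := by
  rw [gd, inner_capMap_right α hp hfp, arccos_cos hα0 hαπ]

end CapGeodesic

lemma le_cos_of_le_arccos {x α : ℝ} (hx₁ : -1 ≤ x) (hx₂ : x ≤ 1) (hα : 0 ≤ α)
    (h : α ≤ arccos x) : x ≤ cos α :=
  cos_arccos hx₁ hx₂ ▸ cos_le_cos_of_nonneg_of_le_pi hα (arccos_le_pi x) h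

section SubsphereAngle

variable {α : ℝ}

noncomputable def subsphereAngle (α : ℝ) : ℝ := arccos (cos α / (1 + cos α))

lemma sin_sq_mul_cos_subsphereAngle_add_cos_sq (h : -(1 / 2) ≤ cos α) :
    sin α ^ 2 * cos (subsphereAngle α) + cos α ^ 2 = cos α := by
  have h1 : 0 < 1 + cos α := by linarith
  rw [subsphereAngle, cos_arccos (by rw [le_div_iff₀ h1]; linarith)
    (by rw [div_le_one h1]; linarith), sin_sq]
  field_simp
  ring

lemma subsphereAngle_pos (h : -(1 / 2) ≤ cos α) : 0 < subsphereAngle α :=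
  arccos_pos.mpr (by rw [div_lt_one (by linarith)]; linarith)

lemma subsphereAngle_le_arccos {r : ℝ} (hr : 0 < r) (h : -(1 / (r + 1)) ≤ cos α) :
    subsphereAngle α ≤ arccos (-(1 / r)) := by
  have h2 : -1 ≤ (r + 1) * cos α := by
    have := mul_le_mul_of_nonneg_left h (by linarith : (0 : ℝ) ≤ r + 1)
    rwa [mul_neg, mul_one_div_cancel (by linarith)] at this
  have h1 : 0 < 1 + cos α := by nlinarith
  have key : cos α / (1 + cos α) + 1 / r = ((r + 1) * cos α + 1) / (r * (1 + cos α)) := by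
    field_simp
    ring
  have : 0 ≤ ((r + 1) * cos α + 1) / (r * (1 + cos α)) := div_nonneg (by linarith) (by positivity)
  exact arccos_le_arccos (by linarith)

lemma exists_forall_abs_arccos_sub_le {δ : ℝ} (hα0 : 0 ≤ α) (hαπ : α ≤ π)
    (h : -(1 / 2) ≤ cos α) (hδ : 0 < δ) :
    ∃ δ' > 0, δ' < subsphereAngle α ∧ ∀ t, |t - subsphereAngle α| ≤ δ' →
      |arccos (sin α ^ 2 * cos t + cos α ^ 2) - α| ≤ δ := by
  have hcont : Continuous fun t => arccos (sin α ^ 2 * cos t + cos α ^ 2) := by fun_prop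
  obtain ⟨η, hη, hη'⟩ := Metric.continuous_iff.mp hcont (subsphereAngle α) δ hδ
  have hθ := subsphereAngle_pos h
  refine ⟨min (η / 2) (subsphereAngle α / 2), by positivity,
    (min_le_right _ _).trans_lt (by linarith), fun t ht => ?_⟩
  have := hη' t (by rw [Real.dist_eq]; linarith [min_le_left (η / 2) (subsphereAngle α / 2)])
  rw [Real.dist_eq, sin_sq_mul_cos_subsphereAngle_add_cos_sq h, arccos_cos hα0 hαπ] at this
  exact this.le

end SubsphereAngle

lemma exists_hom_distGraph_unitSphere_succ {d : ℕ} {α δ θ δ' : ℝ} (hα0 : 0 ≤ α) (hαπ : α ≤ π)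
    (hδ : 0 ≤ δ) (hδα : δ < α)
    (hθ : ∀ t, |t - θ| ≤ δ' → |arccos (sin α ^ 2 * cos t + cos α ^ 2) - α| ≤ δ) :
    ∃ (p : unitSphere (d + 1))
      (φ : distGraph (unitSphere d) θ δ' →g distGraph (unitSphere (d + 1)) α δ),
      ∀ u, (distGraph (unitSphere (d + 1)) α δ).Adj p (φ u) := by
  set p : EuclideanSpace ℝ (Fin (d + 1 + 1)) := EuclideanSpace.single 0 1
  have hp : ‖p‖ = 1 := by simp [p]
  obtain ⟨f, hfp⟩ := exists_linearIsometry_inner_eq_zero (d + 1) (p := p)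
    (norm_ne_zero_iff.mp (by simp [hp]))
  have hunit (u : unitSphere d) : ‖capMap f p α u‖ = 1 :=
    norm_capMap α hp hfp (mem_unitSphere_iff.mp u.2)
  refine ⟨⟨p, mem_unitSphere_iff.mpr hp⟩,
    ⟨fun u => ⟨capMap f p α u, mem_unitSphere_iff.mpr (hunit u)⟩, fun {u v} huv => ?_⟩,
    fun u => ?_⟩
  · refine distGraph_adj_of_abs_sub_le (hunit u) ?_ hδα
    rw [gd_capMap hp hfp (mem_unitSphere_iff.mp u.2) (mem_unitSphere_iff.mp v.2)]
    exact hθ _ (abs_gd_sub_le_of_adj huv)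
  · refine distGraph_adj_of_abs_sub_le hp ?_ hδα
    change |gd p (capMap f p α u) - α| ≤ δ
    rw [gd_capMap_right hp hfp hα0 hαπ]
    simpa using hδ

theorem not_colorable_distGraph_unitSphere (d : ℕ) (hd : 1 ≤ d) {α δ : ℝ} (hδ : 0 < δ)
    (hδα : δ < α) (hαℓ : α ≤ arccos (-(1 / d))) :
    ¬ (distGraph (unitSphere d) α δ).Colorable (d + 1) := by
  induction d, hd using Nat.le_induction generalizing α δ with
  | base =>
    exact not_colorable_two_distGraph_unitSphere_one hδ hδα (hαℓ.trans (arccos_le_pi _))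
  | succ d hd IH =>
    rw [Nat.cast_add_one] at hαℓ
    have hα0 : 0 ≤ α := by linarith
    have hαπ : α ≤ π := hαℓ.trans (arccos_le_pi _)
    have hd' : (1 : ℝ) ≤ d := by exact_mod_cast hd
    have hinv_le : 1 / ((d : ℝ) + 1) ≤ 1 / 2 := by gcongr; linarith
    have hinv_pos : 0 < 1 / ((d : ℝ) + 1) := by positivity
    have hcos : -(1 / ((d : ℝ) + 1)) ≤ cos α :=
      le_cos_of_le_arccos (by linarith) (by linarith) hα0 hαℓ
    obtain ⟨δ', hδ', hδ'θ, hθ⟩ := exists_forall_abs_arccos_sub_le hα0 hαπ (by linarith) hδ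
    obtain ⟨p, φ, hp⟩ := exists_hom_distGraph_unitSphere_succ (d := d) hα0 hαπ hδ.le hδα hθ
    exact fun hcol => IH hδ' hδ'θ (subsphereAngle_le_arccos (by linarith) hcos)
      (hcol.of_hom_of_forall_adj φ hp)

theorem stmt_4_general (d : ℕ) (hd : 1 ≤ d) (α : ℝ)
    (hαℓ : α ≤ Real.arccos (-(1 / d)))
    (ε : ℝ) (hε0 : 0 < ε) (hεα : ε < α)
    (X : Set (EuclideanSpace ℝ (Fin (d + 1)))) (hXS : X ⊆ unitSphere d)
    (hnet : IsNet d (ε / 4) X) :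
    (d + 2 : ℕ) ≤ (distGraph X α ε).chromaticNumber := by
  obtain ⟨snap⟩ := IsNet.nonempty_hom hXS hnet hεα
  have hsphere := not_colorable_distGraph_unitSphere d hd (half_pos hε0) (by linarith) hαℓ
  rw [show d + 2 = (d + 1) + 1 from rfl, Nat.cast_add_one, ENat.add_one_le_iff (by simp),
    ← not_le, SimpleGraph.chromaticNumber_le_iff_colorable]
  exact fun hcol => hsphere (hcol.of_hom snap)

/-- with `ℓ_{d-1} = arccos(-1/d)`, for `0 < α ≤ ℓ_{d-1}` one has
`χ(D_{X,ε}(α)) ≥ d + 2` for every finite `(ε/4)`-net `X` of `S^d`. -/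
theorem stmt_4 (d : ℕ) (hd : 1 ≤ d) (α : ℝ) (hα0 : 0 < α)
    (hαℓ : α ≤ Real.arccos (-(1 / d)))
    (ε : ℝ) (hε0 : 0 < ε) (hεα : ε < α)
    (X : Set (EuclideanSpace ℝ (Fin (d + 1)))) (hXS : X ⊆ unitSphere d)
    (hXfin : X.Finite) (hnet : IsNet d (ε / 4) X) :
    (d + 2 : ℕ) ≤ (distGraph X α ε).chromaticNumber :=
  stmt_4_general d hd α hαℓ ε hε0 hεα X hXS hnet
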